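/- arXiv:1907.00712 — 7 statements merged into one kernel-verified Lean document; each statement's English description precedes it below -/
import Mathlib

section
/- For all x in (0, π/2), 3·sin(x)/(2 + cos(x)) < x < (2/3)·sin(x) + (1/3)·tan(x). -/
/-!
Each inequality compares two functions that agree at `0`, and the difference has a positive
derivative on `(0, π/2)`. For the left one the derivative `2 - 2 cos t - t sin t` is itself shown
positive the same way, its derivative being `sin t - t cos t > 0`, i.e. `t < tan t`. For the right
one the derivative is `2 cos t + 1 / cos² t - 3 = (1 - cos t)² (2 cos t + 1) / cos² t`.
-/

open Real Set

lemma lt_of_hasDerivAt_pos {f f' : ℝ → ℝ} {a b : ℝ} (hab : a < b)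
    (hf : ∀ t ∈ Icc a b, HasDerivAt f (f' t) t) (hf' : ∀ t ∈ Ioo a b, 0 < f' t) :
    f a < f b := by
  obtain ⟨c, hc, hslope⟩ := exists_hasDerivAt_eq_slope f f' hab
    (fun t ht => (hf t ht).continuousAt.continuousWithinAt)
    (fun t ht => hf t (Ioo_subset_Icc_self ht))
  have hpos := hf' c hc
  rw [hslope, div_pos_iff_of_pos_right (sub_pos.2 hab)] at hpos
  exact sub_pos.1 hpos

namespace Real

variable {x : ℝ}

lemma mul_cos_lt_sin (h0 : 0 < x) (hx : x < π / 2) : x * cos x < sin x := by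
  have hcos : 0 < cos x := cos_pos_of_mem_Ioo ⟨by linarith [pi_pos], hx⟩
  rw [← lt_div_iff₀ hcos, ← tan_eq_sin_div_cos]
  exact lt_tan h0 hx

lemma two_mul_cos_add_mul_sin_lt_two (h0 : 0 < x) (hx : x < π / 2) :
    2 * cos x + x * sin x < 2 := by
  let f : ℝ → ℝ := fun t => 2 - (2 * cos t + t * sin t)
  have hf : ∀ t, HasDerivAt f (sin t - t * cos t) t := fun t =>
    ((((hasDerivAt_cos t).const_mul 2).add
      ((hasDerivAt_id' t).mul (hasDerivAt_sin t))).const_sub 2).congr_deriv (by ring)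
  have := lt_of_hasDerivAt_pos (f := f) h0 (fun t _ => hf t)
    fun t ht => sub_pos.2 (mul_cos_lt_sin ht.1 (ht.2.trans hx))
  simpa [f] using this

lemma three_mul_sin_lt_mul_two_add_cos (h0 : 0 < x) (hx : x < π / 2) :
    3 * sin x < x * (2 + cos x) := by
  let f : ℝ → ℝ := fun t => t * (2 + cos t) - 3 * sin t
  have hf : ∀ t, HasDerivAt f (2 - (2 * cos t + t * sin t)) t := fun t =>
    (((hasDerivAt_id' t).mul ((hasDerivAt_cos t).const_add 2)).sub
      ((hasDerivAt_sin t).const_mul 3)).congr_deriv (by ring)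
  have := lt_of_hasDerivAt_pos (f := f) h0 (fun t _ => hf t)
    fun t ht => sub_pos.2 (two_mul_cos_add_mul_sin_lt_two ht.1 (ht.2.trans hx))
  simpa [f] using this

lemma three_lt_two_mul_cos_add_one_div_cos_sq (h0 : 0 < x) (hx : x < π / 2) :
    3 < 2 * cos x + 1 / cos x ^ 2 := by
  have hcos : 0 < cos x := cos_pos_of_mem_Ioo ⟨by linarith [pi_pos], hx⟩
  have hcos_lt_one : cos x < 1 := by
    rw [← cos_zero]
    exact cos_lt_cos_of_nonneg_of_le_pi_div_two le_rfl hx.le h0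
  have key : 2 * cos x + 1 / cos x ^ 2 - 3 = (1 - cos x) ^ 2 * (2 * cos x + 1) / cos x ^ 2 := by
    field_simp
    ring
  rw [← sub_pos, key]
  have := sub_pos.2 hcos_lt_one
  positivity

lemma three_mul_lt_two_mul_sin_add_tan (h0 : 0 < x) (hx : x < π / 2) :
    3 * x < 2 * sin x + tan x := by
  let f : ℝ → ℝ := fun t => 2 * sin t + tan t - 3 * t
  have hf : ∀ t ∈ Icc 0 x, HasDerivAt f (2 * cos t + 1 / cos t ^ 2 - 3) t := fun t ht => by
    have hcos : cos t ≠ 0 :=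
      (cos_pos_of_mem_Ioo ⟨by linarith [pi_pos, ht.1], ht.2.trans_lt hx⟩).ne'
    exact ((((hasDerivAt_sin t).const_mul 2).add (hasDerivAt_tan hcos)).sub
      ((hasDerivAt_id' t).const_mul 3)).congr_deriv (by ring)
  have := lt_of_hasDerivAt_pos (f := f) h0 hf
    fun t ht => sub_pos.2 (three_lt_two_mul_cos_add_one_div_cos_sq ht.1 (ht.2.trans hx))
  simpa [f] using this

end Real

theorem cusa_huygens (x : ℝ) (hx : x ∈ Set.Ioo 0 (π / 2)) :
    3 * sin x / (2 + cos x) < x ∧ x < (2 / 3) * sin x + (1 / 3) * tan x := by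
  obtain ⟨h0, hπ⟩ := hx
  constructor
  · rw [div_lt_iff₀ (by linarith [neg_one_le_cos x])]
    linarith [three_mul_sin_lt_mul_two_add_cos h0 hπ]
  · linarith [three_mul_lt_two_mul_sin_add_tan h0 hπ]
end

section
/- For all x in (0, π], (1/180)·x^5 < x − 3·sin(x)/(2 + cos(x)). -/
open Real Nat

/-!
Integrating `cos t ≤ 1` repeatedly from `0` gives the alternating Taylor bounds
`sin x ≤ x - x³/3! + x⁵/5! - x⁷/7! + x⁹/9!` and `1 - x²/2! + x⁴/4! - x⁶/6! ≤ cos x` for `x ≥ 0`.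
Since `x - x⁵/180 ≥ 0` on `(0, π]`, substituting them into `(x - x⁵/180)(2 + cos x) - 3 sin x`
leaves `x⁷ (1/504 - 29x²/120960 + x⁴/129600)`, a quadratic in `x²` with negative discriminant.
-/

lemma hasDerivAt_pow_succ_div_factorial (m : ℕ) (x : ℝ) :
    HasDerivAt (fun y : ℝ => y ^ (m + 1) / (m + 1)!) (x ^ m / m !) x := by
  refine ((hasDerivAt_pow (m + 1) x).div_const _).congr_deriv ?_
  rw [Nat.factorial_succ]
  push_cast
  field_simp

lemma nonneg_of_hasDerivAt_of_nonneg {f f' : ℝ → ℝ} (hf : ∀ t, HasDerivAt f (f' t) t)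
    (h0 : f 0 = 0) (hf' : ∀ t, 0 ≤ t → 0 ≤ f' t) {x : ℝ} (hx : 0 ≤ x) : 0 ≤ f x := by
  have := monotoneOn_of_hasDerivWithinAt_nonneg (convex_Ici 0)
    (fun t _ => (hf t).continuousAt.continuousWithinAt) (fun t _ => (hf t).hasDerivWithinAt)
    (fun t ht => hf' t (interior_subset ht)) Set.self_mem_Ici hx hx
  rwa [h0] at this

-- `sinTaylor n` and `cosTaylor n` have `n` nonzero terms, of degrees up to `2n - 1` and `2n - 2`.
noncomputable def sinTaylor (n : ℕ) (x : ℝ) : ℝ :=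
  ∑ k ∈ Finset.range n, (-1) ^ k * (x ^ (2 * k + 1) / (2 * k + 1)!)

noncomputable def cosTaylor (n : ℕ) (x : ℝ) : ℝ :=
  ∑ k ∈ Finset.range n, (-1) ^ k * (x ^ (2 * k) / (2 * k)!)

lemma sinTaylor_zero_right (n : ℕ) : sinTaylor n 0 = 0 := by
  simp [sinTaylor]

lemma cosTaylor_succ_zero_right (n : ℕ) : cosTaylor (n + 1) 0 = 1 := by
  simp [cosTaylor, Finset.sum_range_succ']

lemma hasDerivAt_sinTaylor (n : ℕ) (x : ℝ) : HasDerivAt (sinTaylor n) (cosTaylor n x) x := by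
  unfold sinTaylor cosTaylor
  exact HasDerivAt.fun_sum fun k _ => (hasDerivAt_pow_succ_div_factorial (2 * k) x).const_mul _

lemma hasDerivAt_cosTaylor_succ (n : ℕ) (x : ℝ) :
    HasDerivAt (cosTaylor (n + 1)) (-sinTaylor n x) x := by
  have hshift : cosTaylor (n + 1) = fun y =>
      1 - ∑ k ∈ Finset.range n, (-1 : ℝ) ^ k * (y ^ (2 * k + 1 + 1) / (2 * k + 1 + 1)!) := by
    ext y
    simp [cosTaylor, Finset.sum_range_succ', pow_succ, mul_add, sub_eq_neg_add]
  rw [hshift, sinTaylor, ← zero_sub]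
  exact (HasDerivAt.fun_sum fun k _ =>
    (hasDerivAt_pow_succ_div_factorial (2 * k + 1) x).const_mul _).const_sub 1

lemma neg_one_pow_mul_sin_sub_sinTaylor_nonneg_of_cos {n : ℕ}
    (hcos : ∀ t, 0 ≤ t → 0 ≤ (-1) ^ n * (cos t - cosTaylor n t)) {x : ℝ} (hx : 0 ≤ x) :
    0 ≤ (-1) ^ n * (sin x - sinTaylor n x) :=
  nonneg_of_hasDerivAt_of_nonneg
    (fun t => (((hasDerivAt_sin t).sub (hasDerivAt_sinTaylor n t)).const_mul _))
    (by simp [sinTaylor_zero_right]) hcos hx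

lemma neg_one_pow_mul_cos_sub_cosTaylor_nonneg {n : ℕ} (hn : 1 ≤ n) {x : ℝ} (hx : 0 ≤ x) :
    0 ≤ (-1) ^ n * (cos x - cosTaylor n x) := by
  induction n, hn using Nat.le_induction generalizing x with
  | base => simpa [cosTaylor] using cos_le_one x
  | succ n _ ih =>
    refine nonneg_of_hasDerivAt_of_nonneg
      (fun t => ((hasDerivAt_cos t).sub (hasDerivAt_cosTaylor_succ n t)).const_mul _)
      (by simp [cosTaylor_succ_zero_right]) (fun t ht => ?_) hx
    have := neg_one_pow_mul_sin_sub_sinTaylor_nonneg_of_cos (fun t ht => ih ht) ht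
    linarith [show (-1 : ℝ) ^ (n + 1) * (-sin t - -sinTaylor n t)
      = (-1) ^ n * (sin t - sinTaylor n t) by ring]

lemma neg_one_pow_mul_sin_sub_sinTaylor_nonneg {n : ℕ} (hn : 1 ≤ n) {x : ℝ} (hx : 0 ≤ x) :
    0 ≤ (-1) ^ n * (sin x - sinTaylor n x) :=
  neg_one_pow_mul_sin_sub_sinTaylor_nonneg_of_cos
    (fun _ ht => neg_one_pow_mul_cos_sub_cosTaylor_nonneg hn ht) hx

lemma sin_le_taylor_nine {x : ℝ} (hx : 0 ≤ x) :
    sin x ≤ x - x ^ 3 / 6 + x ^ 5 / 120 - x ^ 7 / 5040 + x ^ 9 / 362880 := by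
  have := neg_one_pow_mul_sin_sub_sinTaylor_nonneg (n := 5) (by norm_num) hx
  simp only [sinTaylor, Finset.sum_range_succ, Finset.sum_range_zero] at this
  norm_num [Nat.factorial] at this
  linarith

lemma taylor_six_le_cos {x : ℝ} (hx : 0 ≤ x) :
    1 - x ^ 2 / 2 + x ^ 4 / 24 - x ^ 6 / 720 ≤ cos x := by
  have := neg_one_pow_mul_cos_sub_cosTaylor_nonneg (n := 4) (by norm_num) hx
  simp only [cosTaylor, Finset.sum_range_succ, Finset.sum_range_zero] at this
  norm_num [Nat.factorial] at this
  linarith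

lemma three_mul_sin_lt_mul_two_add_cos {x : ℝ} (hx : 0 < x) (hx4 : x ^ 4 ≤ 180) :
    3 * sin x < (x - x ^ 5 / 180) * (2 + cos x) := by
  have hfactor : 0 ≤ x - x ^ 5 / 180 := by nlinarith [pow_pos hx 4]
  calc 3 * sin x ≤ 3 * (x - x ^ 3 / 6 + x ^ 5 / 120 - x ^ 7 / 5040 + x ^ 9 / 362880) := by
        linarith [sin_le_taylor_nine hx.le]
    _ < (x - x ^ 5 / 180) * (2 + (1 - x ^ 2 / 2 + x ^ 4 / 24 - x ^ 6 / 720)) := by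
        have hgap : (x - x ^ 5 / 180) * (2 + (1 - x ^ 2 / 2 + x ^ 4 / 24 - x ^ 6 / 720))
            - 3 * (x - x ^ 3 / 6 + x ^ 5 / 120 - x ^ 7 / 5040 + x ^ 9 / 362880)
            = x ^ 7 * ((x ^ 2 / 360 - 29 / 672) ^ 2 + 55 / 451584) := by ring
        have : 0 < x ^ 7 * ((x ^ 2 / 360 - 29 / 672) ^ 2 + 55 / 451584) := by positivity
        linarith
    _ ≤ (x - x ^ 5 / 180) * (2 + cos x) := by
        gcongr
        exact taylor_six_le_cos hx.le

theorem zhu_lower_bound (x : ℝ) (hx : x ∈ Set.Ioc 0 π) :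
    (1 / 180) * x ^ 5 < x - 3 * sin x / (2 + cos x) := by
  obtain ⟨hx0, hxπ⟩ := hx
  have hx4 : x ^ 4 ≤ 180 :=
    calc x ^ 4 ≤ 3.15 ^ 4 := by gcongr; exact hxπ.trans pi_lt_d2.le
      _ ≤ 180 := by norm_num
  have hcos : 0 < 2 + cos x := by linarith [neg_one_le_cos x]
  have := (div_lt_iff₀ hcos).2 (three_mul_sin_lt_mul_two_add_cos hx0 hx4)
  linarith
end

section
/- For all x in (0, π], (1/2100)·x^7 < x − (3·sin(x)/(2+cos(x)))·(1 + (1−cos(x))^2/(9·(3+2·cos(x)))). -/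
open Real

lemma nonneg_of_deriv {f g : ℝ → ℝ} (hd : ∀ x, HasDerivAt f (g x) x) (h0 : f 0 = 0)
    (hg : ∀ x, 0 ≤ x → 0 ≤ g x) {x : ℝ} (hx : 0 ≤ x) : 0 ≤ f x := by
  have hdiff : Differentiable ℝ f := fun y => (hd y).differentiableAt
  have hmono : MonotoneOn f (Set.Ici 0) := by
    apply monotoneOn_of_deriv_nonneg (convex_Ici 0) hdiff.continuous.continuousOn
      hdiff.differentiableOn
    intro y hy
    rw [(hd y).deriv]
    exact hg y (le_of_lt (by simpa using hy))
  have := hmono (Set.self_mem_Ici) (by exact hx) hx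
  linarith [h0 ▸ this]

lemma taylor_1 {x : ℝ} (hx : 0 ≤ x) : Real.sin x ≤ x := by
  have h := nonneg_of_deriv (f := fun u : ℝ => u - Real.sin u) (g := fun u : ℝ => 1 - Real.cos u)
    (fun t => ((hasDerivAt_id t).sub (Real.hasDerivAt_sin t)).congr_deriv (by push_cast; ring))
    (by norm_num) (fun t ht => by show (0:ℝ) ≤ 1 - Real.cos t; nlinarith [Real.cos_le_one t]) hx
  have h2 : 0 ≤ x - Real.sin x := h
  linarith

lemma taylor_2 {x : ℝ} (hx : 0 ≤ x) : 1 - x^2/2 ≤ Real.cos x := by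
  have h := nonneg_of_deriv (f := fun u : ℝ => Real.cos u - (1 - u^2/2)) (g := fun u : ℝ => (u) - Real.sin u)
    (fun t => ((Real.hasDerivAt_cos t).sub ((hasDerivAt_const t (1:ℝ)).sub ((hasDerivAt_pow 2 t).div_const 2))).congr_deriv (by push_cast; ring))
    (by norm_num) (fun t ht => by show (0:ℝ) ≤ (t) - Real.sin t; have := taylor_1 ht; linarith) hx
  have h2 : 0 ≤ Real.cos x - (1 - x^2/2) := h
  linarith

lemma taylor_3 {x : ℝ} (hx : 0 ≤ x) : x - x^3/6 ≤ Real.sin x := by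
  have h := nonneg_of_deriv (f := fun u : ℝ => Real.sin u - (u - u^3/6)) (g := fun u : ℝ => Real.cos u - (1 - u^2/2))
    (fun t => ((Real.hasDerivAt_sin t).sub ((hasDerivAt_id t).sub ((hasDerivAt_pow 3 t).div_const 6))).congr_deriv (by push_cast; ring))
    (by norm_num) (fun t ht => by show (0:ℝ) ≤ Real.cos t - (1 - t^2/2); have := taylor_2 ht; linarith) hx
  have h2 : 0 ≤ Real.sin x - (x - x^3/6) := h
  linarith

lemma taylor_4 {x : ℝ} (hx : 0 ≤ x) : Real.cos x ≤ 1 - x^2/2 + x^4/24 := by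
  have h := nonneg_of_deriv (f := fun u : ℝ => (1 - u^2/2 + u^4/24) - Real.cos u) (g := fun u : ℝ => Real.sin u - (u - u^3/6))
    (fun t => ((((hasDerivAt_const t (1:ℝ)).sub ((hasDerivAt_pow 2 t).div_const 2)).add ((hasDerivAt_pow 4 t).div_const 24)).sub (Real.hasDerivAt_cos t)).congr_deriv (by push_cast; ring))
    (by norm_num) (fun t ht => by show (0:ℝ) ≤ Real.sin t - (t - t^3/6); have := taylor_3 ht; linarith) hx
  have h2 : 0 ≤ (1 - x^2/2 + x^4/24) - Real.cos x := h
  linarith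

lemma taylor_5 {x : ℝ} (hx : 0 ≤ x) : Real.sin x ≤ x - x^3/6 + x^5/120 := by
  have h := nonneg_of_deriv (f := fun u : ℝ => (u - u^3/6 + u^5/120) - Real.sin u) (g := fun u : ℝ => (1 - u^2/2 + u^4/24) - Real.cos u)
    (fun t => ((((hasDerivAt_id t).sub ((hasDerivAt_pow 3 t).div_const 6)).add ((hasDerivAt_pow 5 t).div_const 120)).sub (Real.hasDerivAt_sin t)).congr_deriv (by push_cast; ring))
    (by norm_num) (fun t ht => by show (0:ℝ) ≤ (1 - t^2/2 + t^4/24) - Real.cos t; have := taylor_4 ht; linarith) hx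
  have h2 : 0 ≤ (x - x^3/6 + x^5/120) - Real.sin x := h
  linarith

lemma taylor_6 {x : ℝ} (hx : 0 ≤ x) : 1 - x^2/2 + x^4/24 - x^6/720 ≤ Real.cos x := by
  have h := nonneg_of_deriv (f := fun u : ℝ => Real.cos u - (1 - u^2/2 + u^4/24 - u^6/720)) (g := fun u : ℝ => (u - u^3/6 + u^5/120) - Real.sin u)
    (fun t => ((Real.hasDerivAt_cos t).sub ((((hasDerivAt_const t (1:ℝ)).sub ((hasDerivAt_pow 2 t).div_const 2)).add ((hasDerivAt_pow 4 t).div_const 24)).sub ((hasDerivAt_pow 6 t).div_const 720))).congr_deriv (by push_cast; ring))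
    (by norm_num) (fun t ht => by show (0:ℝ) ≤ (t - t^3/6 + t^5/120) - Real.sin t; have := taylor_5 ht; linarith) hx
  have h2 : 0 ≤ Real.cos x - (1 - x^2/2 + x^4/24 - x^6/720) := h
  linarith

lemma taylor_7 {x : ℝ} (hx : 0 ≤ x) : x - x^3/6 + x^5/120 - x^7/5040 ≤ Real.sin x := by
  have h := nonneg_of_deriv (f := fun u : ℝ => Real.sin u - (u - u^3/6 + u^5/120 - u^7/5040)) (g := fun u : ℝ => Real.cos u - (1 - u^2/2 + u^4/24 - u^6/720))
    (fun t => ((Real.hasDerivAt_sin t).sub ((((hasDerivAt_id t).sub ((hasDerivAt_pow 3 t).div_const 6)).add ((hasDerivAt_pow 5 t).div_const 120)).sub ((hasDerivAt_pow 7 t).div_const 5040))).congr_deriv (by push_cast; ring))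
    (by norm_num) (fun t ht => by show (0:ℝ) ≤ Real.cos t - (1 - t^2/2 + t^4/24 - t^6/720); have := taylor_6 ht; linarith) hx
  have h2 : 0 ≤ Real.sin x - (x - x^3/6 + x^5/120 - x^7/5040) := h
  linarith

lemma taylor_8 {x : ℝ} (hx : 0 ≤ x) : Real.cos x ≤ 1 - x^2/2 + x^4/24 - x^6/720 + x^8/40320 := by
  have h := nonneg_of_deriv (f := fun u : ℝ => (1 - u^2/2 + u^4/24 - u^6/720 + u^8/40320) - Real.cos u) (g := fun u : ℝ => Real.sin u - (u - u^3/6 + u^5/120 - u^7/5040))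
    (fun t => ((((((hasDerivAt_const t (1:ℝ)).sub ((hasDerivAt_pow 2 t).div_const 2)).add ((hasDerivAt_pow 4 t).div_const 24)).sub ((hasDerivAt_pow 6 t).div_const 720)).add ((hasDerivAt_pow 8 t).div_const 40320)).sub (Real.hasDerivAt_cos t)).congr_deriv (by push_cast; ring))
    (by norm_num) (fun t ht => by show (0:ℝ) ≤ Real.sin t - (t - t^3/6 + t^5/120 - t^7/5040); have := taylor_7 ht; linarith) hx
  have h2 : 0 ≤ (1 - x^2/2 + x^4/24 - x^6/720 + x^8/40320) - Real.cos x := h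
  linarith

lemma taylor_9 {x : ℝ} (hx : 0 ≤ x) : Real.sin x ≤ x - x^3/6 + x^5/120 - x^7/5040 + x^9/362880 := by
  have h := nonneg_of_deriv (f := fun u : ℝ => (u - u^3/6 + u^5/120 - u^7/5040 + u^9/362880) - Real.sin u) (g := fun u : ℝ => (1 - u^2/2 + u^4/24 - u^6/720 + u^8/40320) - Real.cos u)
    (fun t => ((((((hasDerivAt_id t).sub ((hasDerivAt_pow 3 t).div_const 6)).add ((hasDerivAt_pow 5 t).div_const 120)).sub ((hasDerivAt_pow 7 t).div_const 5040)).add ((hasDerivAt_pow 9 t).div_const 362880)).sub (Real.hasDerivAt_sin t)).congr_deriv (by push_cast; ring))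
    (by norm_num) (fun t ht => by show (0:ℝ) ≤ (1 - t^2/2 + t^4/24 - t^6/720 + t^8/40320) - Real.cos t; have := taylor_8 ht; linarith) hx
  have h2 : 0 ≤ (x - x^3/6 + x^5/120 - x^7/5040 + x^9/362880) - Real.sin x := h
  linarith

lemma taylor_10 {x : ℝ} (hx : 0 ≤ x) : 1 - x^2/2 + x^4/24 - x^6/720 + x^8/40320 - x^10/3628800 ≤ Real.cos x := by
  have h := nonneg_of_deriv (f := fun u : ℝ => Real.cos u - (1 - u^2/2 + u^4/24 - u^6/720 + u^8/40320 - u^10/3628800)) (g := fun u : ℝ => (u - u^3/6 + u^5/120 - u^7/5040 + u^9/362880) - Real.sin u)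
    (fun t => ((Real.hasDerivAt_cos t).sub ((((((hasDerivAt_const t (1:ℝ)).sub ((hasDerivAt_pow 2 t).div_const 2)).add ((hasDerivAt_pow 4 t).div_const 24)).sub ((hasDerivAt_pow 6 t).div_const 720)).add ((hasDerivAt_pow 8 t).div_const 40320)).sub ((hasDerivAt_pow 10 t).div_const 3628800))).congr_deriv (by push_cast; ring))
    (by norm_num) (fun t ht => by show (0:ℝ) ≤ (t - t^3/6 + t^5/120 - t^7/5040 + t^9/362880) - Real.sin t; have := taylor_9 ht; linarith) hx
  have h2 : 0 ≤ Real.cos x - (1 - x^2/2 + x^4/24 - x^6/720 + x^8/40320 - x^10/3628800) := h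
  linarith

lemma taylor_11 {x : ℝ} (hx : 0 ≤ x) : x - x^3/6 + x^5/120 - x^7/5040 + x^9/362880 - x^11/39916800 ≤ Real.sin x := by
  have h := nonneg_of_deriv (f := fun u : ℝ => Real.sin u - (u - u^3/6 + u^5/120 - u^7/5040 + u^9/362880 - u^11/39916800)) (g := fun u : ℝ => Real.cos u - (1 - u^2/2 + u^4/24 - u^6/720 + u^8/40320 - u^10/3628800))
    (fun t => ((Real.hasDerivAt_sin t).sub ((((((hasDerivAt_id t).sub ((hasDerivAt_pow 3 t).div_const 6)).add ((hasDerivAt_pow 5 t).div_const 120)).sub ((hasDerivAt_pow 7 t).div_const 5040)).add ((hasDerivAt_pow 9 t).div_const 362880)).sub ((hasDerivAt_pow 11 t).div_const 39916800))).congr_deriv (by push_cast; ring))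
    (by norm_num) (fun t ht => by show (0:ℝ) ≤ Real.cos t - (1 - t^2/2 + t^4/24 - t^6/720 + t^8/40320 - t^10/3628800); have := taylor_10 ht; linarith) hx
  have h2 : 0 ≤ Real.sin x - (x - x^3/6 + x^5/120 - x^7/5040 + x^9/362880 - x^11/39916800) := h
  linarith

lemma taylor_12 {x : ℝ} (hx : 0 ≤ x) : Real.cos x ≤ 1 - x^2/2 + x^4/24 - x^6/720 + x^8/40320 - x^10/3628800 + x^12/479001600 := by
  have h := nonneg_of_deriv (f := fun u : ℝ => (1 - u^2/2 + u^4/24 - u^6/720 + u^8/40320 - u^10/3628800 + u^12/479001600) - Real.cos u) (g := fun u : ℝ => Real.sin u - (u - u^3/6 + u^5/120 - u^7/5040 + u^9/362880 - u^11/39916800))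
    (fun t => ((((((((hasDerivAt_const t (1:ℝ)).sub ((hasDerivAt_pow 2 t).div_const 2)).add ((hasDerivAt_pow 4 t).div_const 24)).sub ((hasDerivAt_pow 6 t).div_const 720)).add ((hasDerivAt_pow 8 t).div_const 40320)).sub ((hasDerivAt_pow 10 t).div_const 3628800)).add ((hasDerivAt_pow 12 t).div_const 479001600)).sub (Real.hasDerivAt_cos t)).congr_deriv (by push_cast; ring))
    (by norm_num) (fun t ht => by show (0:ℝ) ≤ Real.sin t - (t - t^3/6 + t^5/120 - t^7/5040 + t^9/362880 - t^11/39916800); have := taylor_11 ht; linarith) hx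
  have h2 : 0 ≤ (1 - x^2/2 + x^4/24 - x^6/720 + x^8/40320 - x^10/3628800 + x^12/479001600) - Real.cos x := h
  linarith

lemma taylor_13 {x : ℝ} (hx : 0 ≤ x) : Real.sin x ≤ x - x^3/6 + x^5/120 - x^7/5040 + x^9/362880 - x^11/39916800 + x^13/6227020800 := by
  have h := nonneg_of_deriv (f := fun u : ℝ => (u - u^3/6 + u^5/120 - u^7/5040 + u^9/362880 - u^11/39916800 + u^13/6227020800) - Real.sin u) (g := fun u : ℝ => (1 - u^2/2 + u^4/24 - u^6/720 + u^8/40320 - u^10/3628800 + u^12/479001600) - Real.cos u)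
    (fun t => ((((((((hasDerivAt_id t).sub ((hasDerivAt_pow 3 t).div_const 6)).add ((hasDerivAt_pow 5 t).div_const 120)).sub ((hasDerivAt_pow 7 t).div_const 5040)).add ((hasDerivAt_pow 9 t).div_const 362880)).sub ((hasDerivAt_pow 11 t).div_const 39916800)).add ((hasDerivAt_pow 13 t).div_const 6227020800)).sub (Real.hasDerivAt_sin t)).congr_deriv (by push_cast; ring))
    (by norm_num) (fun t ht => by show (0:ℝ) ≤ (1 - t^2/2 + t^4/24 - t^6/720 + t^8/40320 - t^10/3628800 + t^12/479001600) - Real.cos t; have := taylor_12 ht; linarith) hx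
  have h2 : 0 ≤ (x - x^3/6 + x^5/120 - x^7/5040 + x^9/362880 - x^11/39916800 + x^13/6227020800) - Real.sin x := h
  linarith


set_option maxHeartbeats 4000000 in
theorem zhu_refined_lower_bound (x : ℝ) (hx : x ∈ Set.Ioc 0 π) :
    (1 / 2100) * x ^ 7 <
      x - (3 * sin x / (2 + cos x)) * (1 + (1 - cos x) ^ 2 / (9 * (3 + 2 * cos x))) := by
  obtain ⟨hx0, hxpi⟩ := hx
  have hxnn : (0:ℝ) ≤ x := hx0.le
  have hsl := taylor_7 hxnn
  have hsh := taylor_13 hxnn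
  have hcl := taylor_10 hxnn
  have hch := taylor_8 hxnn
  have hs0 : 0 ≤ Real.sin x := Real.sin_nonneg_of_nonneg_of_le_pi hxnn hxpi
  have hc1 : -1 ≤ Real.cos x := Real.neg_one_le_cos x
  have pyth : Real.sin x ^ 2 + Real.cos x ^ 2 = 1 := Real.sin_sq_add_cos_sq x
  have hx32 : x < 3.141593 := lt_of_le_of_lt hxpi Real.pi_lt_d6
  have hy1 : x^2 ≤ 98697/10000 := by nlinarith
  have hz : (0:ℝ) ≤ 98697/10000 - x^2 := by linarith
  have h6 : (x^2)^3 ≤ ((98697:ℝ)/10000)^3 := pow_le_pow_left₀ (sq_nonneg x) hy1 3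
  have hxm : 0 ≤ x - x^7/2100 := by nlinarith [mul_le_mul_of_nonneg_left h6 hxnn]
  have hs2 : Real.sin x ^ 2 ≤ (x - x^3/6 + x^5/120 - x^7/5040 + x^9/362880 - x^11/39916800 + x^13/6227020800)^2 := by
    nlinarith [mul_nonneg (sub_nonneg.2 hsh) hs0, mul_nonneg (sub_nonneg.2 hsh) (hs0.trans hsh)]
  have hcube : (x - x^3/6 + x^5/120 - x^7/5040)^3 ≤ Real.sin x ^ 3 := by
    nlinarith [mul_nonneg (sub_nonneg.2 hsl)
      (by positivity : (0:ℝ) ≤ (Real.sin x + (x - x^3/6 + x^5/120 - x^7/5040))^2 + Real.sin x ^ 2 + (x - x^3/6 + x^5/120 - x^7/5040)^2)]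
  have hchm1 : (-1:ℝ) ≤ (1 - x^2/2 + x^4/24 - x^6/720 + x^8/40320) := hc1.trans hch
  have hBs : Real.sin x * (87 + 48*Real.cos x) ≤ (x - x^3/6 + x^5/120 - x^7/5040 + x^9/362880 - x^11/39916800 + x^13/6227020800)*(87 + 48*(1 - x^2/2 + x^4/24 - x^6/720 + x^8/40320)) := by
    nlinarith [mul_nonneg hs0 (sub_nonneg.2 hch),
      mul_nonneg (sub_nonneg.2 hsh) (by linarith : (0:ℝ) ≤ 87 + 48*(1 - x^2/2 + x^4/24 - x^6/720 + x^8/40320))]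
  have hA : 72 + 63*(1 - x^2/2 + x^4/24 - x^6/720 + x^8/40320 - x^10/3628800) - 18*(x - x^3/6 + x^5/120 - x^7/5040 + x^9/362880 - x^11/39916800 + x^13/6227020800)^2 ≤ 72 + 63*Real.cos x - 18*Real.sin x ^ 2 := by
    nlinarith [hcl, hs2]
  have hstep := mul_le_mul_of_nonneg_left hA hxm
  have hident : (x - x^7/2100)*(72 + 63*(1 - x^2/2 + x^4/24 - x^6/720 + x^8/40320 - x^10/3628800) - 18*(x - x^3/6 + x^5/120 - x^7/5040 + x^9/362880 - x^11/39916800 + x^13/6227020800)^2) - ((x - x^3/6 + x^5/120 - x^7/5040 + x^9/362880 - x^11/39916800 + x^13/6227020800)*(87 + 48*(1 - x^2/2 + x^4/24 - x^6/720 + x^8/40320)) - 3*(x - x^3/6 + x^5/120 - x^7/5040)^3) = x^9 * ((25000000000000000000000000/30409299045386775211200206888197971 : ℝ) * x^0 * (98697/10000 - x^2)^7 + (217434730937500000000000000000/63220932715359105664085230120563581709 : ℝ) * x^2 * (98697/10000 - x^2)^6 + (5287311963242461718750000000000/821872125299668373633107991567326562217 : ℝ) * x^4 * (98697/10000 - x^2)^5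 + (40385505000733563542187500000000/5753104877097678615431755940971285935519 : ℝ) * x^6 * (98697/10000 - x^2)^4 + (27948910697282451674333548437500/5753104877097678615431755940971285935519 : ℝ) * x^8 * (98697/10000 - x^2)^3 + (389191280175206155430985595373125/184099356067125715693816190111081149936608 : ℝ) * x^10 * (98697/10000 - x^2)^2 + (209040678254744520539555077028857/396521689990732310725142563316174784478848 : ℝ) * x^12 * (98697/10000 - x^2)^1 + (1226762494816870719545851957261135302049/22681040667469888173478154621685197672190105600000 : ℝ) * x^14 + x^16 * ((13967/80552741068800000 : ℝ) - (130451/75397365640396800000 : ℝ) * x^2) + x^20 * ((47/3624873348096000000 : ℝ) - (1/14499493392384000000 : ℝ) * x^2) + (1/4523841938423808000000 : ℝ) * x^24) := by ring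
  have t0 : (0:ℝ) ≤ (25000000000000000000000000/30409299045386775211200206888197971 : ℝ) * x^0 * (98697/10000 - x^2)^7 :=
    mul_nonneg (mul_nonneg (by norm_num) (pow_nonneg hxnn 0)) (pow_nonneg hz 7)
  have t1 : (0:ℝ) ≤ (217434730937500000000000000000/63220932715359105664085230120563581709 : ℝ) * x^2 * (98697/10000 - x^2)^6 :=
    mul_nonneg (mul_nonneg (by norm_num) (pow_nonneg hxnn 2)) (pow_nonneg hz 6)
  have t2 : (0:ℝ) ≤ (5287311963242461718750000000000/821872125299668373633107991567326562217 : ℝ) * x^4 * (98697/10000 - x^2)^5 :=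
    mul_nonneg (mul_nonneg (by norm_num) (pow_nonneg hxnn 4)) (pow_nonneg hz 5)
  have t3 : (0:ℝ) ≤ (40385505000733563542187500000000/5753104877097678615431755940971285935519 : ℝ) * x^6 * (98697/10000 - x^2)^4 :=
    mul_nonneg (mul_nonneg (by norm_num) (pow_nonneg hxnn 6)) (pow_nonneg hz 4)
  have t4 : (0:ℝ) ≤ (27948910697282451674333548437500/5753104877097678615431755940971285935519 : ℝ) * x^8 * (98697/10000 - x^2)^3 :=
    mul_nonneg (mul_nonneg (by norm_num) (pow_nonneg hxnn 8)) (pow_nonneg hz 3)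
  have t5 : (0:ℝ) ≤ (389191280175206155430985595373125/184099356067125715693816190111081149936608 : ℝ) * x^10 * (98697/10000 - x^2)^2 :=
    mul_nonneg (mul_nonneg (by norm_num) (pow_nonneg hxnn 10)) (pow_nonneg hz 2)
  have t6 : (0:ℝ) ≤ (209040678254744520539555077028857/396521689990732310725142563316174784478848 : ℝ) * x^12 * (98697/10000 - x^2)^1 :=
    mul_nonneg (mul_nonneg (by norm_num) (pow_nonneg hxnn 12)) (pow_nonneg hz 1)
  have t7 : (0:ℝ) < (1226762494816870719545851957261135302049/22681040667469888173478154621685197672190105600000 : ℝ) * x^14 := mul_pos (by norm_num) (pow_pos hx0 14)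
  have t8 : (0:ℝ) ≤ x^16 * ((13967/80552741068800000 : ℝ) - (130451/75397365640396800000 : ℝ) * x^2) :=
    mul_nonneg (pow_nonneg hxnn 16) (by nlinarith [hy1])
  have t9 : (0:ℝ) ≤ x^20 * ((47/3624873348096000000 : ℝ) - (1/14499493392384000000 : ℝ) * x^2) :=
    mul_nonneg (pow_nonneg hxnn 20) (by nlinarith [hy1])
  have t10 : (0:ℝ) ≤ (1/4523841938423808000000 : ℝ) * x^24 := by positivity
  have hT : (0:ℝ) < ((25000000000000000000000000/30409299045386775211200206888197971 : ℝ) * x^0 * (98697/10000 - x^2)^7 + (217434730937500000000000000000/63220932715359105664085230120563581709 : ℝ) * x^2 * (98697/10000 - x^2)^6 + (5287311963242461718750000000000/821872125299668373633107991567326562217 : ℝ) * x^4 * (98697/10000 - x^2)^5 + (40385505000733563542187500000000/5753104877097678615431755940971285935519 : ℝ) * x^6 * (98697/10000 - x^2)^4 + (27948910697282451674333548437500/5753104877097678615431755940971285935519 : ℝ) * x^8 * (98697/10000 - x^2)^3 + (389191280175206155430985595373125/184099356067125715693816190111081149936608 : ℝ) * x^10 * (98697/10000 - x^2)^2 + (209040678254744520539555077028857/396521689990732310725142563316174784478848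 : ℝ) * x^12 * (98697/10000 - x^2)^1 + (1226762494816870719545851957261135302049/22681040667469888173478154621685197672190105600000 : ℝ) * x^14 + x^16 * ((13967/80552741068800000 : ℝ) - (130451/75397365640396800000 : ℝ) * x^2) + x^20 * ((47/3624873348096000000 : ℝ) - (1/14499493392384000000 : ℝ) * x^2) + (1/4523841938423808000000 : ℝ) * x^24) := by linarith
  have hQpos : (0:ℝ) < (x - x^7/2100)*(72 + 63*(1 - x^2/2 + x^4/24 - x^6/720 + x^8/40320 - x^10/3628800) - 18*(x - x^3/6 + x^5/120 - x^7/5040 + x^9/362880 - x^11/39916800 + x^13/6227020800)^2) - ((x - x^3/6 + x^5/120 - x^7/5040 + x^9/362880 - x^11/39916800 + x^13/6227020800)*(87 + 48*(1 - x^2/2 + x^4/24 - x^6/720 + x^8/40320)) - 3*(x - x^3/6 + x^5/120 - x^7/5040)^3) := by rw [hident]; exact mul_pos (pow_pos hx0 9) hT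
  have e1 : x*(54 + 63*Real.cos x + 18*Real.cos x ^ 2) - Real.sin x*(84 + 48*Real.cos x + 3*Real.cos x ^ 2) - x^7/2100*(54 + 63*Real.cos x + 18*Real.cos x ^ 2)
      = (x - x^7/2100)*(72 + 63*Real.cos x - 18*Real.sin x ^ 2) - (Real.sin x*(87 + 48*Real.cos x) - 3*Real.sin x ^ 3) := by
    linear_combination ((x - x^7/2100)*18 - 3*Real.sin x) * pyth
  have key : 0 < x*(54 + 63*Real.cos x + 18*Real.cos x ^ 2) - Real.sin x*(84 + 48*Real.cos x + 3*Real.cos x ^ 2) - x^7/2100*(54 + 63*Real.cos x + 18*Real.cos x ^ 2) := by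
    rw [e1]; linarith [hstep, hBs, hcube, hQpos]
  have h2c : (0:ℝ) < 2 + Real.cos x := by linarith
  have h3c : (0:ℝ) < 3 + 2*Real.cos x := by linarith
  have hden : (0:ℝ) < 9*(2+Real.cos x)*(3+2*Real.cos x) := by
    have := mul_pos h2c h3c; nlinarith
  have expand : x - (3 * Real.sin x / (2 + Real.cos x)) * (1 + (1 - Real.cos x) ^ 2 / (9 * (3 + 2 * Real.cos x))) - (1/2100)*x^7
      = (x*(54 + 63*Real.cos x + 18*Real.cos x ^ 2) - Real.sin x*(84 + 48*Real.cos x + 3*Real.cos x ^ 2) - x^7/2100*(54 + 63*Real.cos x + 18*Real.cos x ^ 2)) / (9*(2+Real.cos x)*(3+2*Real.cos x)) := by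
    field_simp
    ring
  have hfin := div_pos key hden
  rw [← expand] at hfin
  linarith
end

section
/- For every natural number n ≥ 1, 2·(2n)!/π^{2n} · 1/(2^{2n} − 1) < B_{2n} < 2·(2n)!/π^{2n} · 1/(2^{2n} − 2), where B_{2n} denotes the absolute value of the 2n-th Bernoulli number. -/
/-!
By Euler, `|B_{2n}| = 2 (2n)! ζ(2n) / (2π)^{2n}`, so the claim is
`2^s / (2^s - 1) < ζ(s) < 2^s / (2^s - 2)` for `s = 2n`. Splitting `ζ(s)` into even and odd
terms, the lower bound says that the Dirichlet lambda function `(1 - 2^{-s}) ζ(s)` exceeds `1`,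
and the upper bound that the Dirichlet eta function `(1 - 2^{1-s}) ζ(s)` is less than `1`:
both are clear termwise.
-/

open Real

section DirichletSeries

variable {s : ℕ} {Z : ℝ}

lemma hasSum_one_div_even_pow (h : HasSum (fun k : ℕ => 1 / (k : ℝ) ^ s) Z) :
    HasSum (fun k : ℕ => 1 / ((2 * k : ℕ) : ℝ) ^ s) (Z / 2 ^ s) := by
  have heven : (fun k : ℕ => 1 / ((2 * k : ℕ) : ℝ) ^ s) =
      fun k : ℕ => 1 / 2 ^ s * (1 / (k : ℝ) ^ s) := by
    ext k
    push_cast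
    rw [mul_pow, one_div_mul_one_div]
  have h' := h.mul_left (1 / 2 ^ s)
  rwa [one_div_mul_eq_div, ← heven] at h'

lemma hasSum_one_div_odd_pow (h : HasSum (fun k : ℕ => 1 / (k : ℝ) ^ s) Z) :
    HasSum (fun k : ℕ => 1 / ((2 * k + 1 : ℕ) : ℝ) ^ s) (Z - Z / 2 ^ s) := by
  obtain ⟨O, hO⟩ : Summable fun k : ℕ => 1 / ((2 * k + 1 : ℕ) : ℝ) ^ s :=
    h.summable.comp_injective fun a b hab => by omega
  have hZ : Z = Z / 2 ^ s + O := h.unique ((hasSum_one_div_even_pow h).even_add_odd hO)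
  rwa [show Z - Z / 2 ^ s = O by linarith]

lemma one_lt_sub_div_two_pow (h : HasSum (fun k : ℕ => 1 / (k : ℝ) ^ s) Z) :
    1 < Z - Z / 2 ^ s := by
  refine hasSum_lt (f := fun k => if k = 0 then 1 else 0) (i := 1) (fun k => ?_) ?_
    (hasSum_ite_eq 0 1) (hasSum_one_div_odd_pow h)
  · rcases k with _ | k
    · simp
    · simp only [Nat.add_one_ne_zero, if_false]
      positivity
  · simp only [one_ne_zero, if_false]
    positivity

/-- The eta function pairs off into the summands `1 / (2k+1)^s - 1 / (2k)^s`, negative for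
`k ≠ 0`; the `k = 0` one is `1` because `1 / 0 = 0`. -/
lemma sub_two_mul_div_two_pow_lt_one (hs : s ≠ 0)
    (h : HasSum (fun k : ℕ => 1 / (k : ℝ) ^ s) Z) : Z - 2 * (Z / 2 ^ s) < 1 := by
  have hpair := (hasSum_one_div_odd_pow h).sub (hasSum_one_div_even_pow h)
  rw [sub_sub, ← two_mul] at hpair
  refine hasSum_lt (g := fun k => if k = 0 then 1 else 0) (i := 1) (fun k => ?_) ?_
    hpair (hasSum_ite_eq 0 1)
  · rcases k with _ | k
    · simp [hs]
    · simp only [Nat.add_one_ne_zero, if_false, sub_nonpos]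
      gcongr
      omega
  · norm_num
    gcongr
    norm_num

lemma one_div_two_pow_sub_one_lt_div_two_pow (hs : s ≠ 0)
    (h : HasSum (fun k : ℕ => 1 / (k : ℝ) ^ s) Z) : 1 / (2 ^ s - 1) < Z / 2 ^ s := by
  have hA : (1 : ℝ) < 2 ^ s := one_lt_pow₀ (by norm_num) hs
  have hlambda : Z / 2 ^ s * (2 ^ s - 1) = Z - Z / 2 ^ s := by field_simp
  rw [div_lt_iff₀ (by linarith), hlambda]
  exact one_lt_sub_div_two_pow h

lemma div_two_pow_lt_one_div_two_pow_sub_two (hs : 2 ≤ s)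
    (h : HasSum (fun k : ℕ => 1 / (k : ℝ) ^ s) Z) : Z / 2 ^ s < 1 / (2 ^ s - 2) := by
  have hA : (2 : ℝ) ^ 2 ≤ 2 ^ s := pow_le_pow_right₀ (by norm_num) hs
  have heta : Z / 2 ^ s * (2 ^ s - 2) = Z - 2 * (Z / 2 ^ s) := by field_simp
  rw [lt_div_iff₀ (by linarith), heta]
  exact sub_two_mul_div_two_pow_lt_one (by omega) h

end DirichletSeries

open Nat in
lemma abs_bernoulli_two_mul_eq {n : ℕ} (hn : n ≠ 0) :
    |((bernoulli (2 * n) : ℚ) : ℝ)| =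
      2 * (2 * n)! / π ^ (2 * n) * ((∑' k : ℕ, 1 / (k : ℝ) ^ (2 * n)) / 2 ^ (2 * n)) := by
  have h := hasSum_zeta_nat hn
  have hpos : 0 < ∑' k : ℕ, 1 / (k : ℝ) ^ (2 * n) :=
    h.summable.tsum_pos (fun k => by positivity) 1 (by norm_num)
  have hZ : ∑' k : ℕ, 1 / (k : ℝ) ^ (2 * n) =
      2 ^ (2 * n - 1) * π ^ (2 * n) * |((bernoulli (2 * n) : ℚ) : ℝ)| / (2 * n)! := by
    rw [← abs_of_pos hpos, h.tsum_eq]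
    simp [abs_div, abs_mul, abs_of_pos pi_pos]
  have htwo : (2 : ℝ) ^ (2 * n) = 2 * 2 ^ (2 * n - 1) := by
    rw [← _root_.pow_succ']
    congr 1
    omega
  rw [hZ, htwo]
  field_simp

theorem daniello_bernoulli (n : ℕ) (hn : 1 ≤ n) :
    2 * (Nat.factorial (2 * n) : ℝ) / π ^ (2 * n) * (1 / (2 ^ (2 * n) - 1)) <
      |((bernoulli (2 * n) : ℚ) : ℝ)| ∧
    |((bernoulli (2 * n) : ℚ) : ℝ)| <
      2 * (Nat.factorial (2 * n) : ℝ) / π ^ (2 * n) * (1 / (2 ^ (2 * n) - 2)) := by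
  have hn0 : n ≠ 0 := by omega
  have hZ := (Real.summable_one_div_nat_pow.2 (by omega : 1 < 2 * n)).hasSum
  have hC : 0 < 2 * (Nat.factorial (2 * n) : ℝ) / π ^ (2 * n) := by positivity
  rw [abs_bernoulli_two_mul_eq hn0]
  exact ⟨mul_lt_mul_of_pos_left (one_div_two_pow_sub_one_lt_div_two_pow (by omega) hZ) hC,
    mul_lt_mul_of_pos_left (div_two_pow_lt_one_div_two_pow_sub_two (by omega) hZ) hC⟩
end

section
/- For every natural number n ≥ 1, 2·(2/π)^{2n} < 2^{2n}·(2^{2n} − 1)·|B_{2n}|/(2n)! < 2·(2/π)^{2n}·(2^{2n} − 1)/(2^{2n} − 2). -/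
/-!
Euler's formula `ζ(2n) = 2^(2n-1) π^(2n) |B_(2n)| / (2n)!` turns the middle quantity into
`2 (2/π)^(2n) (1 - 2^(-2n)) ζ(2n)`, so the claim is `2^s/(2^s-1) < ζ(s) < 2^s/(2^s-2)` at `s = 2n`.
The even terms of `ζ(s)` sum to `2^(-s) ζ(s)`; the lower bound says that the odd terms
`1 + 3^(-s) + 5^(-s) + ⋯` sum to more than `1`, and the upper bound that
`1 - 2^(-s) + 3^(-s) - 4^(-s) + ⋯ < 1`, which follows by pairing `(2k+2)^(-s)` with `(2k+3)^(-s)`.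
-/

open Real
open scoped Nat

theorem StrictAnti.tsum_odd_lt_tsum_even {a : ℕ → ℝ} (ha : StrictAnti a) (hsum : Summable a) :
    ∑' k, a (2 * k + 1) < ∑' k, a (2 * k) :=
  Summable.tsum_lt_tsum (i := 0) (fun k => (ha (Nat.lt_succ_self _)).le) (ha zero_lt_one)
    (hsum.comp_injective fun _ _ h => by simpa using h)
    (hsum.comp_injective fun _ _ h => by simpa using h)

section ZetaNat

variable {s : ℕ}

theorem four_le_two_pow (hs : 1 < s) : (4 : ℝ) ≤ 2 ^ s :=
  calc (4 : ℝ) = 2 ^ 2 := by norm_num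
    _ ≤ 2 ^ s := pow_le_pow_right₀ (by norm_num) hs

theorem hasSum_one_div_two_mul_pow (hs : 1 < s) :
    HasSum (fun k : ℕ => 1 / ((2 * k : ℕ) : ℝ) ^ s) ((∑' k : ℕ, 1 / (k : ℝ) ^ s) / 2 ^ s) := by
  have hterm (k : ℕ) : 1 / ((2 * k : ℕ) : ℝ) ^ s = 1 / (k : ℝ) ^ s / 2 ^ s := by
    push_cast
    rw [mul_pow, div_div, mul_comm]
  simpa only [hterm] using (Real.summable_one_div_nat_pow.2 hs).hasSum.div_const (2 ^ s)

theorem summable_one_div_two_mul_add_one_pow (hs : 1 < s) :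
    Summable fun k : ℕ => 1 / ((2 * k + 1 : ℕ) : ℝ) ^ s :=
  (Real.summable_one_div_nat_pow.2 hs).comp_injective fun _ _ h => by simpa using h

theorem one_lt_tsum_one_div_two_mul_add_one_pow (hs : 1 < s) :
    1 < ∑' k : ℕ, 1 / ((2 * k + 1 : ℕ) : ℝ) ^ s := by
  have hodd := summable_one_div_two_mul_add_one_pow hs
  have htail : 0 < ∑' k : ℕ, 1 / ((2 * (k + 1) + 1 : ℕ) : ℝ) ^ s :=
    ((summable_nat_add_iff 1).2 hodd).tsum_pos (fun _ => by positivity) 0 (by positivity)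
  rw [hodd.tsum_eq_zero_add]
  simpa using htail

theorem tsum_one_div_two_mul_add_one_pow_lt (hs : 1 < s) :
    ∑' k : ℕ, 1 / ((2 * k + 1 : ℕ) : ℝ) ^ s < 1 + ∑' k : ℕ, 1 / ((2 * k : ℕ) : ℝ) ^ s := by
  have hanti : StrictAnti fun k : ℕ => 1 / ((k + 2 : ℕ) : ℝ) ^ s := fun a b hab => by
    push_cast
    gcongr
  have hpairs := hanti.tsum_odd_lt_tsum_even
    ((summable_nat_add_iff 2).2 (Real.summable_one_div_nat_pow.2 hs))
  rw [(summable_one_div_two_mul_add_one_pow hs).tsum_eq_zero_add,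
    (hasSum_one_div_two_mul_pow hs).summable.tsum_eq_zero_add]
  have hone : 1 / ((2 * 0 + 1 : ℕ) : ℝ) ^ s = 1 := by simp
  have hzero : 1 / ((2 * 0 : ℕ) : ℝ) ^ s = 0 := by simp [zero_pow (by omega : s ≠ 0)]
  rw [hone, hzero, zero_add]
  exact (add_lt_add_iff_left 1).2 hpairs

theorem two_pow_div_lt_tsum_one_div_nat_pow (hs : 1 < s) :
    2 ^ s / (2 ^ s - 1) < ∑' k : ℕ, 1 / (k : ℝ) ^ s ∧
      ∑' k : ℕ, 1 / (k : ℝ) ^ s < 2 ^ s / (2 ^ s - 2) := by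
  set ζ := ∑' k : ℕ, 1 / (k : ℝ) ^ s
  set t : ℝ := 2 ^ s
  have heven := hasSum_one_div_two_mul_pow hs
  have hsplit : ζ = ζ / t + ∑' k : ℕ, 1 / ((2 * k + 1 : ℕ) : ℝ) ^ s :=
    (Real.summable_one_div_nat_pow.2 hs).hasSum.unique
      (heven.even_add_odd (summable_one_div_two_mul_add_one_pow hs).hasSum)
  have hlower := one_lt_tsum_one_div_two_mul_add_one_pow hs
  have hupper := tsum_one_div_two_mul_add_one_pow_lt hs
  rw [heven.tsum_eq] at hupper
  have ht : 4 ≤ t := four_le_two_pow hs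
  have hζt : ζ / t * t = ζ := div_mul_cancel₀ ζ (by positivity)
  constructor
  · rw [div_lt_iff₀ (by linarith)]
    nlinarith
  · rw [lt_div_iff₀ (by linarith)]
    nlinarith

end ZetaNat

theorem two_pow_mul_abs_bernoulli_div_factorial {n : ℕ} (hn : n ≠ 0) :
    2 ^ (2 * n) * |(bernoulli (2 * n) : ℝ)| / (2 * n)! =
      2 * (∑' k : ℕ, 1 / (k : ℝ) ^ (2 * n)) / π ^ (2 * n) := by
  have hζ := (hasSum_zeta_nat hn).tsum_eq
  -- `ζ(2n) ≥ 0` takes care of the sign `(-1)^(n+1)` in Euler's formula.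
  rw [← abs_of_nonneg (tsum_nonneg fun k => by positivity : 0 ≤ ∑' k : ℕ, 1 / (k : ℝ) ^ (2 * n)),
    hζ]
  simp only [abs_div, abs_mul, abs_pow, abs_neg, abs_one, one_pow, one_mul, abs_two,
    abs_of_pos pi_pos, Nat.abs_cast]
  rw [← mul_pow_sub_one (by omega : 2 * n ≠ 0) (2 : ℝ)]
  field_simp

theorem daniello_bernoulli_equiv (n : ℕ) (hn : 1 ≤ n) :
    2 * (2 / π) ^ (2 * n) <
      2 ^ (2 * n) * (2 ^ (2 * n) - 1) * |((bernoulli (2 * n) : ℚ) : ℝ)| /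
        (Nat.factorial (2 * n) : ℝ) ∧
    2 ^ (2 * n) * (2 ^ (2 * n) - 1) * |((bernoulli (2 * n) : ℚ) : ℝ)| /
        (Nat.factorial (2 * n) : ℝ) <
      2 * (2 / π) ^ (2 * n) * ((2 ^ (2 * n) - 1) / (2 ^ (2 * n) - 2)) := by
  obtain ⟨hlower, hupper⟩ := two_pow_div_lt_tsum_one_div_nat_pow (s := 2 * n) (by omega)
  set ζ := ∑' k : ℕ, 1 / (k : ℝ) ^ (2 * n)
  set t : ℝ := 2 ^ (2 * n)
  have ht : 4 ≤ t := four_le_two_pow (by omega)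
  have hmiddle : t * (t - 1) * |(bernoulli (2 * n) : ℝ)| / (2 * n)! =
      2 * (2 / π) ^ (2 * n) * ((t - 1) / t * ζ) := by
    rw [mul_right_comm, mul_div_right_comm, two_pow_mul_abs_bernoulli_div_factorial (by omega),
      div_pow]
    field_simp
    ring
  have hc : 0 < 2 * (2 / π) ^ (2 * n) := by positivity
  rw [hmiddle]
  have hfactor : 0 < (t - 1) / t := div_pos (by linarith) (by linarith)
  constructor
  · refine lt_mul_of_one_lt_right hc ?_
    calc 1 = (t - 1) / t * (t / (t - 1)) := by
          rw [div_mul_div_cancel₀ (by linarith), div_self (by linarith)]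
      _ < (t - 1) / t * ζ := mul_lt_mul_of_pos_left hlower hfactor
  · refine mul_lt_mul_of_pos_left ?_ hc
    calc (t - 1) / t * ζ < (t - 1) / t * (t / (t - 2)) := mul_lt_mul_of_pos_left hupper hfactor
      _ = (t - 1) / (t - 2) := div_mul_div_cancel₀ (by linarith)
end

section
/- Let 0 < c < π/2 be fixed. Then for all x ∈ (0, c), x < (2/3)·sin(x) + (1/3)·tan(x) < ((2/3)·sin(c) + (1/3)·tan(c))/c · x. -/
/-!
`huygens = (2/3) sin + (1/3) tan` vanishes at `0`, and its derivative is `huygensDeriv ∘ cos`,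
a strictly decreasing function of `cos`, hence strictly increasing on `(0, π/2)`.
So `huygens` is strictly convex on `[0, π/2)`, and the slope `huygens x / x` of its chords
from the origin is strictly increasing in `x` and exceeds `huygens' 0 = huygensDeriv 1 = 1`.
-/

open Real Set

noncomputable def huygens (x : ℝ) : ℝ := 2 / 3 * sin x + 1 / 3 * tan x

noncomputable def huygensDeriv (t : ℝ) : ℝ := 2 / 3 * t + 1 / 3 * (1 / t ^ 2)

lemma huygens_zero : huygens 0 = 0 := by
  simp [huygens]

lemma huygensDeriv_one : huygensDeriv 1 = 1 := by
  norm_num [huygensDeriv]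

lemma strictAntiOn_huygensDeriv : StrictAntiOn huygensDeriv (Ioc 0 1) := by
  rintro s ⟨hs0, hs1⟩ t ⟨ht0, ht1⟩ hst
  have hdiff : huygensDeriv s - huygensDeriv t
      = (t - s) * (t + s - 2 * s ^ 2 * t ^ 2) / (3 * s ^ 2 * t ^ 2) := by
    unfold huygensDeriv
    field_simp
    ring
  have hst2 : s ^ 2 * t ^ 2 ≤ s := by
    nlinarith [mul_le_one₀ hs1 (by positivity) (pow_le_one₀ (n := 2) ht0.le ht1)]
  have hgap : 0 < huygensDeriv s - huygensDeriv t := by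
    rw [hdiff]
    exact div_pos (mul_pos (by linarith) (by linarith)) (by positivity)
  linarith

lemma hasDerivAt_huygens {x : ℝ} (hx : cos x ≠ 0) :
    HasDerivAt huygens (huygensDeriv (cos x)) x :=
  ((hasDerivAt_sin x).const_mul _).add ((hasDerivAt_tan hx).const_mul _)

lemma continuousOn_huygens : ContinuousOn huygens {x | cos x ≠ 0} :=
  (continuousOn_const.mul continuous_sin.continuousOn).add (continuousOn_const.mul continuousOn_tan)

lemma strictMonoOn_deriv_huygens : StrictMonoOn (deriv huygens) (Ioo 0 (π / 2)) := by
  have hcos : MapsTo cos (Ioo 0 (π / 2)) (Ioc 0 1) := fun y hy =>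
    ⟨cos_pos_of_mem_Ioo ⟨by linarith [hy.1, pi_pos], hy.2⟩, cos_le_one y⟩
  refine (strictAntiOn_huygensDeriv.comp
    (strictAntiOn_cos.mono fun y hy => ⟨hy.1.le, by linarith [hy.2, pi_pos]⟩) hcos).congr ?_
  intro y hy
  exact ((hasDerivAt_huygens (hcos hy).1.ne').deriv).symm

lemma strictConvexOn_huygens : StrictConvexOn ℝ (Ico 0 (π / 2)) huygens := by
  refine StrictMonoOn.strictConvexOn_of_deriv (convex_Ico _ _)
    (continuousOn_huygens.mono fun y hy => ?_) (by rw [interior_Ico]; exact strictMonoOn_deriv_huygens)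
  exact (cos_pos_of_mem_Ioo ⟨by linarith [hy.1, pi_pos], hy.2⟩).ne'

theorem huygens_linear_bounds (c : ℝ) (hc : 0 < c) (hc' : c < π / 2)
    (x : ℝ) (hx : x ∈ Set.Ioo 0 c) :
    x < (2 / 3) * sin x + (1 / 3) * tan x ∧
    (2 / 3) * sin x + (1 / 3) * tan x < ((2 / 3) * sin c + (1 / 3) * tan c) / c * x := by
  show x < huygens x ∧ huygens x < huygens c / c * x
  obtain ⟨hx0, hxc⟩ := hx
  have h0 : (0 : ℝ) ∈ Ico 0 (π / 2) := ⟨le_rfl, by positivity⟩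
  have hxS : x ∈ Ico 0 (π / 2) := ⟨hx0.le, hxc.trans hc'⟩
  have hcS : c ∈ Ico 0 (π / 2) := ⟨hc.le, hc'⟩
  have hderiv0 : HasDerivAt huygens 1 0 := by
    simpa [huygensDeriv_one] using hasDerivAt_huygens (x := 0) (by simp)
  have hlower : 1 < huygens x / x := by
    simpa [slope_def_field, huygens_zero] using
      strictConvexOn_huygens.lt_slope_of_hasDerivAt h0 hxS hx0 hderiv0
  have hupper : huygens x / x < huygens c / c := by
    simpa [huygens_zero] using
      strictConvexOn_huygens.secant_strict_mono h0 hxS hcS hx0.ne' hc.ne' hxc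
  constructor
  · simpa using (lt_div_iff₀ hx0).1 hlower
  · rw [div_lt_div_iff₀ hx0 hc] at hupper
    rw [div_mul_eq_mul_div, lt_div_iff₀ hc]
    linarith
end

section
/- For all x ∈ (0, π/2), 1/(π/2 − x) − 2/π < tan(x) < 1/(π/2 − x) − 2/π + (1 − 4/π²)·x. -/
/-!
Each inequality reads `f 0 < f x`, for `f = tan - (π / 2 - ·)⁻¹` and for
`f = (π / 2 - ·)⁻¹ + (1 - 4 / π²) · id - tan` respectively, so it suffices that `f` is strictly
increasing on `[0, π / 2)`. With `t = π / 2 - x`, the first derivative is positive because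
`sin t < t`. The second is positive because `1 / sin² t - 1 / t²` increases on `(0, π)` (its
derivative has the sign of `sin³ t - t³ cos t`, positive by the Taylor bounds for `sin` and `cos`)
and equals `1 - 4 / π²` at `t = π / 2`.
-/

open Real Set

theorem strictMonoOn_of_hasDerivAt_pos {D : Set ℝ} (hD : Convex ℝ D) {f f' : ℝ → ℝ}
    (hf : ∀ x ∈ D, HasDerivAt f (f' x) x) (hf' : ∀ x ∈ interior D, 0 < f' x) :
    StrictMonoOn f D :=
  strictMonoOn_of_hasDerivWithinAt_pos hD
    (fun x hx => (hf x hx).continuousAt.continuousWithinAt)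
    (fun x hx => (hf x (interior_subset hx)).hasDerivWithinAt) hf'

theorem hasDerivAt_inv_const_sub {a y : ℝ} (h : a - y ≠ 0) :
    HasDerivAt (fun x => (a - x)⁻¹) ((a - y) ^ 2)⁻¹ y :=
  (((hasDerivAt_id y).const_sub a).inv h).congr_deriv (by simp [div_eq_mul_inv])

namespace Real

theorem cos_lt_one_sub_sq_div_two_add_pow_four_div {x : ℝ} (hx : 0 < x) :
    cos x < 1 - x ^ 2 / 2 + x ^ 4 / 24 := by
  have hmono : StrictMonoOn (fun s => 1 - s ^ 2 / 2 + s ^ 4 / 24 - cos s) (Ici 0) := by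
    refine strictMonoOn_of_hasDerivAt_pos (convex_Ici 0)
      (fun s _ => ((((hasDerivAt_pow 2 s).div_const 2).const_sub 1).add
        ((hasDerivAt_pow 4 s).div_const 24)).sub (hasDerivAt_cos s)) ?_
    rw [interior_Ici]
    intro s hs
    have := sin_gt_sub_cube hs
    push_cast
    linarith
  simpa using hmono self_mem_Ici hx.le hx

theorem pow_three_mul_cos_lt_sin_pow_three {x : ℝ} (h0 : 0 < x) (hπ : x < π) :
    x ^ 3 * cos x < sin x ^ 3 := by
  have hsin : 0 < sin x := sin_pos_of_pos_of_lt_pi h0 hπ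
  by_cases hx : x ^ 2 ≤ 6
  · have hcubic : 0 ≤ x - x ^ 3 / 6 := by nlinarith
    -- `(x - x³/6)³ - x³ (1 - x²/2 + x⁴/24) = x⁷ (9 - x²) / 216`
    calc x ^ 3 * cos x < x ^ 3 * (1 - x ^ 2 / 2 + x ^ 4 / 24) :=
          mul_lt_mul_of_pos_left (cos_lt_one_sub_sq_div_two_add_pow_four_div h0) (by positivity)
      _ ≤ (x - x ^ 3 / 6) ^ 3 := by
          nlinarith [mul_nonneg (pow_nonneg h0.le 7) (by linarith : (0 : ℝ) ≤ 9 - x ^ 2)]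
      _ < sin x ^ 3 := pow_lt_pow_left₀ (sin_gt_sub_cube h0) hcubic three_ne_zero
  · have hcos : cos x ≤ 0 := cos_nonpos_of_pi_div_two_le_of_le
      (by nlinarith [pi_lt_d2]) (by linarith [pi_pos])
    nlinarith [pow_pos hsin 3, pow_pos h0 3]

theorem strictMonoOn_inv_sin_sq_sub_inv_sq :
    StrictMonoOn (fun x => (sin x ^ 2)⁻¹ - (x ^ 2)⁻¹) (Ioo 0 π) := by
  refine strictMonoOn_of_hasDerivAt_pos (convex_Ioo 0 π)
    (f' := fun x => 2 * (sin x ^ 3 - x ^ 3 * cos x) / (x ^ 3 * sin x ^ 3)) (fun x hx => ?_) ?_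
  · have hsin := sin_pos_of_pos_of_lt_pi hx.1 hx.2
    have hx0 := hx.1.ne'
    refine ((((hasDerivAt_sin x).fun_pow 2).inv (pow_ne_zero 2 hsin.ne')).sub
      ((hasDerivAt_pow 2 x).inv (pow_ne_zero 2 hx0))).congr_deriv ?_
    field_simp
    ring
  rw [interior_Ioo]
  intro x ⟨h0, hπ⟩
  have := pow_three_mul_cos_lt_sin_pow_three h0 hπ
  have hsin := sin_pos_of_pos_of_lt_pi h0 hπ
  apply div_pos <;> [linarith; positivity]

theorem inv_sin_sq_lt {x : ℝ} (h0 : 0 < x) (hx : x < π / 2) :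
    (sin x ^ 2)⁻¹ < (x ^ 2)⁻¹ + 1 - 4 / π ^ 2 := by
  have h := strictMonoOn_inv_sin_sq_sub_inv_sq ⟨h0, by linarith⟩
    ⟨by linarith [pi_pos], by linarith [pi_pos]⟩ hx
  have hπ : ((π / 2) ^ 2)⁻¹ = 4 / π ^ 2 := by field_simp; ring
  simp only [sin_pi_div_two, one_pow, inv_one, hπ] at h
  linarith

theorem cos_lt_pi_div_two_sub {x : ℝ} (hx : x < π / 2) : cos x < π / 2 - x := by
  rw [← sin_pi_div_two_sub]
  exact sin_lt (sub_pos.2 hx)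

theorem strictMonoOn_tan_sub_inv_pi_div_two_sub :
    StrictMonoOn (fun x => tan x - (π / 2 - x)⁻¹) (Ico 0 (π / 2)) := by
  refine strictMonoOn_of_hasDerivAt_pos (convex_Ico 0 (π / 2))
    (f' := fun x => 1 / cos x ^ 2 - ((π / 2 - x) ^ 2)⁻¹) (fun x hx => ?_) ?_
  · have hcos := cos_pos_of_mem_Ioo ⟨by linarith [hx.1, pi_pos], hx.2⟩
    exact (hasDerivAt_tan hcos.ne').sub (hasDerivAt_inv_const_sub (sub_pos.2 hx.2).ne')
  rw [interior_Ico]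
  intro x ⟨h0, hx⟩
  have hcos := cos_pos_of_mem_Ioo ⟨by linarith [pi_pos], hx⟩
  have hsq : cos x ^ 2 < (π / 2 - x) ^ 2 :=
    pow_lt_pow_left₀ (cos_lt_pi_div_two_sub hx) hcos.le two_ne_zero
  rw [sub_pos, one_div]
  exact (inv_lt_inv₀ (by positivity) (by positivity)).2 hsq

theorem strictMonoOn_inv_pi_div_two_sub_add_mul_sub_tan :
    StrictMonoOn (fun x => (π / 2 - x)⁻¹ + (1 - 4 / π ^ 2) * x - tan x) (Ico 0 (π / 2)) := by
  refine strictMonoOn_of_hasDerivAt_pos (convex_Ico 0 (π / 2))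
    (f' := fun x => ((π / 2 - x) ^ 2)⁻¹ + (1 - 4 / π ^ 2) - 1 / cos x ^ 2) (fun x hx => ?_) ?_
  · have hcos := cos_pos_of_mem_Ioo ⟨by linarith [hx.1, pi_pos], hx.2⟩
    exact ((hasDerivAt_inv_const_sub (sub_pos.2 hx.2).ne').add
      ((hasDerivAt_id x).const_mul _)).sub (hasDerivAt_tan hcos.ne') |>.congr_deriv (by ring)
  rw [interior_Ico]
  intro x ⟨h0, hx⟩
  have h := inv_sin_sq_lt (sub_pos.2 hx) (by linarith)
  rw [sin_pi_div_two_sub] at h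
  rw [one_div]
  linarith

end Real

theorem tan_rational_bounds_1 (x : ℝ) (hx : x ∈ Set.Ioo 0 (π / 2)) :
    1 / (π / 2 - x) - 2 / π < tan x ∧
    tan x < 1 / (π / 2 - x) - 2 / π + (1 - 4 / π ^ 2) * x := by
  obtain ⟨h0, hx⟩ := hx
  have hmem : x ∈ Ico 0 (π / 2) := ⟨h0.le, hx⟩
  have hzero : (0 : ℝ) ∈ Ico 0 (π / 2) := ⟨le_rfl, by linarith [pi_pos]⟩
  have hlower := strictMonoOn_tan_sub_inv_pi_div_two_sub hzero hmem h0
  have hupper := strictMonoOn_inv_pi_div_two_sub_add_mul_sub_tan hzero hmem h0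
  have hπ : (π / 2)⁻¹ = 2 / π := by rw [inv_div]
  simp only [tan_zero, sub_zero, mul_zero, add_zero, zero_sub, hπ] at hlower hupper
  rw [one_div]
  constructor <;> linarith
end
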